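/- arXiv:2604.02047 — 2 statements merged into one kernel-verified Lean document; each statement's English description precedes it below -/
import Mathlib

section
/- Let p_t ∈ (0,1), p_s ∈ (p_t, 1], let D ≥ 1 be an integer and let B ≥ D be a budget. Let F = {w : {1,…,D} → ℕ : w_d ≥ 1 for all d and Σ_{d=1}^{D} w_d ≤ B}, which is a nonempty finite set. Then max_{w ∈ F} Y(q'(w)) > max_{w ∈ F} Y(q(w)), where q(w)_d = 1 − (1−p_t)^{w_d} and q'(w)_d = 1 − (1−p_s)(1−p_t)^{w_d−1}; that is, the best spine-upgraded tree of budget B achieves strictly higher expected yield than the best single-source isotropic tree of the same budget (Proposition 3, Spine Tree Dominance). -/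
/-!
Upgrading one candidate per depth from acceptance rate `p_t` to `p_s > p_t` strictly raises
every advance probability of a tree with a given width profile, and the yield is monotone in
the advance probabilities and strictly so in the first one. Hence the spine-upgraded yield of
the best isotropic profile already beats the best isotropic yield, and the best spine-upgraded
profile does at least as well.
-/

/-- Expected yield of a speculation tree with per-depth advance probabilities
`q_1,…,q_D` (0-indexed here as `q 0, …, q (D-1)`):
`Y(q) = 1 + ∑_{d=1}^{D} ∏_{j=1}^{d} q_j`, including the bonus token. -/
noncomputable def yieldY (D : ℕ) (q : ℕ → ℝ) : ℝ :=
  1 + ∑ d ∈ Finset.range D, ∏ j ∈ Finset.range (d + 1), q j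

theorem yieldY_lt_yieldY {D : ℕ} {q q' : ℕ → ℝ} (hD : 0 < D) (hq : ∀ j < D, 0 ≤ q j)
    (hle : ∀ j < D, q j ≤ q' j) (hlt : q 0 < q' 0) : yieldY D q < yieldY D q' := by
  refine add_lt_add_right
    (Finset.sum_lt_sum (fun d hd => ?_) ⟨0, Finset.mem_range.mpr hD, ?_⟩) 1
  · have hdj : ∀ j ∈ Finset.range (d + 1), j < D := fun j hj => by simp at hd hj; omega
    exact Finset.prod_le_prod (fun j hj => hq j (hdj j hj)) (fun j hj => hle j (hdj j hj))
  · simpa using hlt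

theorem one_sub_pow_nonneg {p : ℝ} (hp₀ : 0 ≤ p) (hp₁ : p ≤ 1) (k : ℕ) :
    0 ≤ 1 - (1 - p) ^ k :=
  sub_nonneg.mpr (pow_le_one₀ (by linarith) (by linarith))

theorem one_sub_pow_lt_one_sub_mul_pow {ps pt : ℝ} (hpt : pt < 1) (hps : pt < ps) {k : ℕ}
    (hk : 1 ≤ k) : 1 - (1 - pt) ^ k < 1 - (1 - ps) * (1 - pt) ^ (k - 1) := by
  obtain ⟨n, rfl⟩ := Nat.exists_eq_add_of_le' hk
  have hpow : 0 < (1 - pt) ^ n := pow_pos (by linarith) n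
  rw [Nat.add_sub_cancel, pow_succ']
  nlinarith

theorem finite_setOf_sum_le {ι : Type*} [Fintype ι] [DecidableEq ι] (P : (ι → ℕ) → Prop)
    (B : ℕ) : {w : ι → ℕ | P w ∧ ∑ i, w i ≤ B}.Finite := by
  refine (Set.finite_Icc 0 fun _ => B).subset fun w hw => ⟨zero_le, fun i => ?_⟩
  exact (Finset.single_le_sum (fun j _ => Nat.zero_le (w j)) (Finset.mem_univ i)).trans hw.2

/-- Proposition 3 (Spine Tree Dominance): over the nonempty finite family `F` of width
profiles `w : {1,…,D} → ℕ` with `w_d ≥ 1` and `∑ w_d ≤ B`, the best spine-upgraded tree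
(advance probabilities `1 - (1-p_s)(1-p_t)^{w_d-1}`) achieves strictly higher expected
yield than the best single-source isotropic tree (advance probabilities
`1 - (1-p_t)^{w_d}`) at the same budget. -/
theorem spine_tree_dominance (ps pt : ℝ) (hpt : pt ∈ Set.Ioo (0 : ℝ) 1)
    (hps : ps ∈ Set.Ioc pt 1) (D B : ℕ) (hD : 1 ≤ D) (hB : D ≤ B) :
    ({w : Fin D → ℕ | (∀ d, 1 ≤ w d) ∧ (∑ d, w d) ≤ B}).Nonempty ∧
    ({w : Fin D → ℕ | (∀ d, 1 ≤ w d) ∧ (∑ d, w d) ≤ B}).Finite ∧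
    ∃ Miso Mspine : ℝ,
      IsGreatest ((fun w : Fin D → ℕ =>
          yieldY D (fun d => if h : d < D then 1 - (1 - pt) ^ (w ⟨d, h⟩) else 1)) ''
        {w : Fin D → ℕ | (∀ d, 1 ≤ w d) ∧ (∑ d, w d) ≤ B}) Miso ∧
      IsGreatest ((fun w : Fin D → ℕ =>
          yieldY D (fun d => if h : d < D then
            1 - (1 - ps) * (1 - pt) ^ (w ⟨d, h⟩ - 1) else 1)) ''
        {w : Fin D → ℕ | (∀ d, 1 ≤ w d) ∧ (∑ d, w d) ≤ B}) Mspine ∧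
      Miso < Mspine := by
  set F := {w : Fin D → ℕ | (∀ d, 1 ≤ w d) ∧ (∑ d, w d) ≤ B}
  set iso := fun w : Fin D → ℕ =>
    yieldY D (fun d => if h : d < D then 1 - (1 - pt) ^ (w ⟨d, h⟩) else 1)
  set spine := fun w : Fin D → ℕ =>
    yieldY D (fun d => if h : d < D then 1 - (1 - ps) * (1 - pt) ^ (w ⟨d, h⟩ - 1) else 1)
  have hD₀ : 0 < D := hD
  have hne : F.Nonempty := ⟨fun _ => 1, fun _ => le_rfl, by simpa using hB⟩
  have hfin : F.Finite := finite_setOf_sum_le _ B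
  have iso_lt_spine : ∀ w ∈ F, iso w < spine w := fun w hw =>
    yieldY_lt_yieldY hD₀ (fun j hj => by simpa [hj] using one_sub_pow_nonneg hpt.1.le hpt.2.le _)
      (fun j hj => by simpa [hj] using (one_sub_pow_lt_one_sub_mul_pow hpt.2 hps.1 (hw.1 _)).le)
      (by simpa [hD₀] using one_sub_pow_lt_one_sub_mul_pow hpt.2 hps.1 (hw.1 ⟨0, hD₀⟩))
  obtain ⟨_, ⟨w, hw, rfl⟩, hiso⟩ :=
    (hfin.image iso).isCompact.exists_isGreatest (hne.image iso)
  obtain ⟨Mspine, hspine⟩ := (hfin.image spine).isCompact.exists_isGreatest (hne.image spine)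
  exact ⟨hne, hfin, iso w, Mspine, ⟨⟨w, hw, rfl⟩, hiso⟩, hspine,
    (iso_lt_spine w hw).trans_le (hspine.2 ⟨w, hw, rfl⟩)⟩
end

section
/- In the heterogeneous acceptance model with spine length m ≥ 1, branch widths w_0, …, w_{m−1}, spine acceptance rate p_s and branch acceptance rate p_t, the expected yield satisfies E[τ] ≥ Σ_{i=1}^{m} p_s^i + 1, with equality when w_i = 0 for all i; that is, the spine tree's expected yield is at least the expected yield of the standalone context-matched chain of the same spine length (the context-matching half of Proposition 4, Non-Degradation Guarantee). -/
open MeasureTheory ProbabilityTheory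

/-- Initial all-success run length of the finite `Bool`-valued sequence
`X 0, …, X (n-1)`: the largest `l ∈ {0,…,n}` with `X 0 = ⋯ = X (l-1) = true`. -/
def runLen (X : ℕ → Bool) (n : ℕ) : ℕ :=
  Nat.findGreatest (fun l => ∀ i < l, X i = true) n

/-- Yield of one verification cycle of the spine tree: with spine run length
`L = runLen S m`, the yield is `L + 1` if `L = m`, and otherwise
`L + 1 + 1{∃ j < w L, B L j = 1} · (1 + runLen (C L) (D-1))`. -/
def tau (m D : ℕ) (w : ℕ → ℕ) (S : ℕ → Ω → Bool) (B C : ℕ → ℕ → Ω → Bool)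
    (ω : Ω) : ℕ :=
  let L := runLen (fun i => S i ω) m
  if L = m then L + 1
  else L + 1 + (if ∃ j < w L, B L j ω = true then
      1 + runLen (fun k => C L k ω) (D - 1) else 0)

/-! The yield always dominates `L + 1`, with equality when every branch width vanishes, so
everything reduces to `E[L]`. By the tail-sum formula `L = ∑_{l=1}^m 1{S_1 = ⋯ = S_l = 1}`, and
by independence of the spine tokens each of these events has probability `p_s ^ l`. -/

open Finset

section RunLength

variable (X : ℕ → Bool) (n : ℕ)

lemma runLen_le : runLen X n ≤ n :=
  Nat.findGreatest_le n

variable {X n} in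
lemma le_runLen_iff {l : ℕ} (hl : l ≤ n) : l ≤ runLen X n ↔ ∀ i < l, X i = true :=
  ⟨fun h i hi => Nat.findGreatest_spec (P := fun l => ∀ i < l, X i = true) (Nat.zero_le n)
    (by simp) i (hi.trans_le h), Nat.le_findGreatest (P := fun l => ∀ i < l, X i = true) hl⟩

lemma runLen_eq_card_filter :
    runLen X n = #{l ∈ Icc 1 n | ∀ i < l, X i = true} := by
  have : {l ∈ Icc 1 n | ∀ i < l, X i = true} = Icc 1 (runLen X n) := by
    ext l
    simp only [mem_filter, mem_Icc]
    constructor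
    · rintro ⟨⟨h1, hl⟩, h⟩
      exact ⟨h1, (le_runLen_iff hl).2 h⟩
    · rintro ⟨h1, hl⟩
      have hln := hl.trans (runLen_le X n)
      exact ⟨⟨h1, hln⟩, (le_runLen_iff hln).1 hl⟩
  simp [this]

end RunLength

section Measurability

variable {Ω : Type*} [MeasurableSpace Ω] {X : ℕ → Ω → Bool}

lemma measurableSet_forall_lt_eq_true (hX : ∀ i, Measurable (X i)) (l : ℕ) :
    MeasurableSet {ω | ∀ i < l, X i ω = true} :=
  measurableSet_setOfPred.2 (.forall fun i => measurable_const.imp ((hX i).eq measurable_const))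

lemma measurableSet_exists_lt_eq_true (hX : ∀ i, Measurable (X i)) (l : ℕ) :
    MeasurableSet {ω | ∃ i < l, X i ω = true} :=
  measurableSet_setOfPred.2 (.exists fun i => measurable_const.and ((hX i).eq measurable_const))

lemma measurable_runLen (hX : ∀ i, Measurable (X i)) (n : ℕ) :
    Measurable fun ω => runLen (fun i => X i ω) n :=
  measurable_findGreatest fun l _ => measurableSet_forall_lt_eq_true hX l

end Measurability

section Expectation

variable {Ω : Type*} [MeasurableSpace Ω] {μ : Measure Ω}

lemma integrable_natCast_of_le [IsFiniteMeasure μ] {f : Ω → ℕ} (hf : Measurable f) {N : ℕ}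
    (hN : ∀ ω, f ω ≤ N) : Integrable (fun ω => (f ω : ℝ)) μ :=
  .of_bound (by fun_prop) N (ae_of_all _ fun ω => by simpa using hN ω)

lemma integral_runLen [IsFiniteMeasure μ] {X : ℕ → Ω → Bool} (hX : ∀ i, Measurable (X i))
    (n : ℕ) :
    ∫ ω, (runLen (fun i => X i ω) n : ℝ) ∂μ =
      ∑ l ∈ Icc 1 n, μ.real {ω | ∀ i < l, X i ω = true} := by
  have hsum : ∀ ω, (runLen (fun i => X i ω) n : ℝ) =
      ∑ l ∈ Icc 1 n, {ω | ∀ i < l, X i ω = true}.indicator 1 ω := fun ω => by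
    rw [runLen_eq_card_filter, card_filter]
    push_cast
    simp [Set.indicator_apply]
  simp_rw [hsum]
  rw [integral_finsetSum _ fun l _ =>
    (integrable_const 1).indicator (measurableSet_forall_lt_eq_true hX l)]
  exact sum_congr rfl fun l _ => integral_indicator_one (measurableSet_forall_lt_eq_true hX l)

lemma ProbabilityTheory.iIndepFun.measure_forall_eq_true {ι : Type*} [Fintype ι]
    {X : ι → Ω → Bool} (h : iIndepFun X μ) :
    μ {ω | ∀ i, X i ω = true} = ∏ i, μ {ω | X i ω = true} := by
  convert h.meas_iInter (s := fun i => {ω | X i ω = true}) fun i => ⟨{true}, trivial, rfl⟩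
  ext
  simp

end Expectation

section Yield

variable {Ω : Type*} (m D : ℕ) (w : ℕ → ℕ) (S : ℕ → Ω → Bool) (B C : ℕ → ℕ → Ω → Bool)
  (ω : Ω)

lemma runLen_add_one_le_tau : runLen (fun i => S i ω) m + 1 ≤ tau m D w S B C ω := by
  dsimp only [tau]
  split_ifs <;> omega

lemma tau_le : tau m D w S B C ω ≤ m + D + 1 := by
  have hL := runLen_le (fun i => S i ω) m
  dsimp only [tau]
  split_ifs with h
  · omega
  · have := runLen_le (fun k => C (runLen (fun i => S i ω) m) k ω) (D - 1)
    omega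
  · omega

variable {m w} in
lemma tau_eq_of_width_eq_zero (hw : ∀ i < m, w i = 0) :
    tau m D w S B C ω = runLen (fun i => S i ω) m + 1 := by
  have hL := runLen_le (fun i => S i ω) m
  dsimp only [tau]
  split_ifs with h h'
  · rfl
  · obtain ⟨j, hj, -⟩ := h'
    rw [hw _ (lt_of_le_of_ne hL h)] at hj
    omega
  · rfl

variable {S B C} in
lemma measurable_tau [MeasurableSpace Ω] (hS : ∀ i, Measurable (S i))
    (hB : ∀ i j, Measurable (B i j)) (hC : ∀ i k, Measurable (C i k)) :
    Measurable (tau m D w S B C) := by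
  let g : Ω × ℕ → ℕ := fun p =>
    if p.2 = m then p.2 + 1
    else p.2 + 1 + (if ∃ j < w p.2, B p.2 j p.1 = true then
      1 + runLen (fun k => C p.2 k p.1) (D - 1) else 0)
  have hg : Measurable g := measurable_from_prod_countable_left fun l => by
    simp only [g]
    refine Measurable.ite (MeasurableSet.const _) measurable_const (Measurable.const_add ?_ _)
    exact Measurable.ite (measurableSet_exists_lt_eq_true (hB l) _)
      ((measurable_runLen (hC l) _).const_add _) measurable_const
  exact hg.comp (measurable_id.prodMk (measurable_runLen hS m))

end Yield

theorem spine_tree_non_degradation_general {Ω : Type*} [MeasurableSpace Ω] (μ : Measure Ω)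
    [IsProbabilityMeasure μ] (m D : ℕ)
    (ps : ℝ) (hps : ps ∈ Set.Icc (0 : ℝ) 1)
    (w : ℕ → ℕ) (S : ℕ → Ω → Bool) (B C : ℕ → ℕ → Ω → Bool)
    (hSmeas : ∀ i, Measurable (S i))
    (hBmeas : ∀ i j, Measurable (B i j))
    (hCmeas : ∀ i k, Measurable (C i k))
    (hS : ∀ i < m, μ {ω | S i ω = true} = ENNReal.ofReal ps)
    (hindep : iIndepFun
      (Sum.elim (fun i : {i : ℕ // i < m} => S i.1)
        (Sum.elim
          (fun p : {p : ℕ × ℕ // p.1 < m ∧ p.2 < w p.1} => B p.1.1 p.1.2)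
          (fun p : {p : ℕ × ℕ // p.1 < m ∧ p.2 < D - 1} => C p.1.1 p.1.2))) μ) :
    (∑ i ∈ Finset.Icc 1 m, ps ^ i) + 1 ≤ ∫ ω, (tau m D w S B C ω : ℝ) ∂μ ∧
    ((∀ i < m, w i = 0) →
      (∫ ω, (tau m D w S B C ω : ℝ) ∂μ) = (∑ i ∈ Finset.Icc 1 m, ps ^ i) + 1) := by
  have hprefix : ∀ l ≤ m, μ.real {ω | ∀ i < l, S i ω = true} = ps ^ l := fun l hl => by
    have hspine : iIndepFun (fun i : {i // i < m} => S i) μ := hindep.precomp Sum.inl_injective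
    have hfirst : iIndepFun (fun i : Fin l => S i) μ :=
      hspine.precomp (g := fun i => ⟨i, i.2.trans_le hl⟩) fun i j h =>
        Fin.ext (congrArg Subtype.val h)
    have := hfirst.measure_forall_eq_true
    simp only [Fin.forall_iff] at this
    rw [measureReal_def, this, prod_congr rfl fun (i : Fin l) _ => hS i (i.2.trans_le hl),
      prod_const, card_fin, ← ENNReal.ofReal_pow hps.1,
      ENNReal.toReal_ofReal (pow_nonneg hps.1 l)]
  have hrun : Integrable (fun ω => (runLen (fun i => S i ω) m : ℝ)) μ :=
    integrable_natCast_of_le (measurable_runLen hSmeas m) fun ω => runLen_le _ m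
  have hmean :
      ∫ ω, ((runLen (fun i => S i ω) m : ℝ) + 1) ∂μ = ∑ i ∈ Icc 1 m, ps ^ i + 1 := by
    rw [integral_add hrun (integrable_const 1), integral_runLen hSmeas,
      sum_congr rfl fun l hl => hprefix l (mem_Icc.1 hl).2]
    simp
  have htau : Integrable (fun ω => (tau m D w S B C ω : ℝ)) μ :=
    integrable_natCast_of_le (measurable_tau m D w hSmeas hBmeas hCmeas) (tau_le m D w S B C)
  refine ⟨hmean ▸ integral_mono (hrun.add (integrable_const 1)) htau fun ω => ?_,
    fun hw => hmean ▸ integral_congr_ae (ae_of_all _ fun ω => ?_)⟩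
  · exact_mod_cast runLen_add_one_le_tau m D w S B C ω
  · simp [tau_eq_of_width_eq_zero D S B C ω hw]

/-- Context-matching half of Proposition 4 (Non-Degradation Guarantee): in the
heterogeneous acceptance model, the spine tree's expected yield satisfies
`E[τ] ≥ ∑_{i=1}^{m} p_s^i + 1`, with equality when all branch widths vanish;
i.e. it is at least the expected yield of the standalone context-matched chain. -/
theorem spine_tree_non_degradation {Ω : Type*} [MeasurableSpace Ω] (μ : Measure Ω)
    [IsProbabilityMeasure μ] (m D : ℕ) (hm : 1 ≤ m) (hD : 1 ≤ D)
    (ps pt : ℝ) (hps : ps ∈ Set.Icc (0 : ℝ) 1) (hpt : pt ∈ Set.Icc (0 : ℝ) 1)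
    (w : ℕ → ℕ) (S : ℕ → Ω → Bool) (B C : ℕ → ℕ → Ω → Bool)
    (hSmeas : ∀ i, Measurable (S i))
    (hBmeas : ∀ i j, Measurable (B i j))
    (hCmeas : ∀ i k, Measurable (C i k))
    (hS : ∀ i < m, μ {ω | S i ω = true} = ENNReal.ofReal ps)
    (hB : ∀ i < m, ∀ j < w i, μ {ω | B i j ω = true} = ENNReal.ofReal pt)
    (hC : ∀ i < m, ∀ k < D - 1, μ {ω | C i k ω = true} = ENNReal.ofReal pt)
    (hindep : iIndepFun
      (Sum.elim (fun i : {i : ℕ // i < m} => S i.1)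
        (Sum.elim
          (fun p : {p : ℕ × ℕ // p.1 < m ∧ p.2 < w p.1} => B p.1.1 p.1.2)
          (fun p : {p : ℕ × ℕ // p.1 < m ∧ p.2 < D - 1} => C p.1.1 p.1.2))) μ) :
    (∑ i ∈ Finset.Icc 1 m, ps ^ i) + 1 ≤ ∫ ω, (tau m D w S B C ω : ℝ) ∂μ ∧
    ((∀ i < m, w i = 0) →
      (∫ ω, (tau m D w S B C ω : ℝ) ∂μ) = (∑ i ∈ Finset.Icc 1 m, ps ^ i) + 1) :=
  spine_tree_non_degradation_general μ m D ps hps w S B C hSmeas hBmeas hCmeas hS hindep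
end
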